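/- arXiv:1301.2227 — 2 statements merged into one kernel-verified Lean document; each statement's English description precedes it below -/
import Mathlib

section
/- Let q be any nonzero complex number. In the tensor algebra T(V) of V = ℂ² equipped with the q-shuffle product * determined by the symmetric bicharacter χ with χ(F1,F1) = χ(F2,F2) = q² and χ(F1,F2) = χ(F2,F1) = q⁻¹, the q-Serre relations hold identically: F1*F1*F2 − (q+q⁻¹)·F1*F2*F1 + F2*F1*F1 = 0 and F2*F2*F1 − (q+q⁻¹)·F2*F1*F2 + F1*F2*F2 = 0. -/
/-!
Both relations are the case `a ≠ b` of a single identity in the letters `a, b`. Expanding the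
`q`-shuffle products in the basis of words, each of the three terms is a combination of the words
`aab`, `aba`, `baa` with Laurent-polynomial coefficients in `q`, and these cancel; for instance the
coefficient of `aab` is `(1 + q²) - (q + q⁻¹)² + q⁻²(1 + q²) = 0`.
-/

/-- Words in the two letters `F1 = 0` and `F2 = 1`: a basis of `T(ℂ²)`. -/
abbrev Word := List (Fin 2)

/-- The underlying space of the tensor algebra `T(ℂ²)`, as the free `ℂ`-module on words. -/
abbrev TA := Word →₀ ℂ

/-- The symmetric bicharacter on letters: `χ(F1,F1) = χ(F2,F2) = q²`,
`χ(F1,F2) = χ(F2,F1) = q⁻¹`. -/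
noncomputable def chi (q : ℂ) (a b : Fin 2) : ℂ := if a = b then q ^ 2 else q⁻¹

/-- The `q`-shuffle product of two basis words: every `(m,n)`-shuffle of the two words
appears, weighted by the product of `χ(xᵢ, yⱼ)` over all pairs `(i,j)` such that the
letter `yⱼ` is placed before the letter `xᵢ` in the shuffled word. -/
noncomputable def shufWord (q : ℂ) : Word → Word → TA
  | [], v => Finsupp.single v 1
  | u, [] => Finsupp.single u 1
  | x :: u, y :: v =>
      Finsupp.mapDomain (List.cons x) (shufWord q u (y :: v))
      + (((x :: u).map (fun a => chi q a y)).prod) •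
          Finsupp.mapDomain (List.cons y) (shufWord q (x :: u) v)
  termination_by u v => u.length + v.length

/-- The `q`-shuffle product on `T(ℂ²)`, extended bilinearly from basis words. -/
noncomputable def shufMul (q : ℂ) (f g : TA) : TA :=
  f.sum fun u cu => g.sum fun v cv => (cu * cv) • shufWord q u v

/-- The empty word: the unit of the shuffle algebra. -/
noncomputable def oneTA : TA := Finsupp.single ([] : Word) 1

/-- The generator `F1` as an element of `T(ℂ²)`. -/
noncomputable def F1 : TA := Finsupp.single ([0] : Word) 1

/-- The generator `F2` as an element of `T(ℂ²)`. -/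
noncomputable def F2 : TA := Finsupp.single ([1] : Word) 1

open Finsupp

section Bilinearity

variable (q : ℂ)

lemma shufMul_single_single (c d : ℂ) (u v : Word) :
    shufMul q (single u c) (single v d) = (c * d) • shufWord q u v := by
  rw [shufMul, sum_single_index (by simp), sum_single_index (by simp)]

lemma shufMul_add_left (f g h : TA) :
    shufMul q (f + g) h = shufMul q f h + shufMul q g h := by
  refine sum_add_index' (by simp) fun u c₁ c₂ => ?_
  rw [← sum_add]
  simp only [add_mul, add_smul]

lemma shufMul_smul_left (c : ℂ) (f g : TA) :
    shufMul q (c • f) g = c • shufMul q f g := by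
  rw [shufMul, sum_smul_index' (by simp)]
  simp only [shufMul, smul_sum, smul_eq_mul, mul_assoc, mul_smul]

end Bilinearity

lemma shufWord_singleton_singleton (q : ℂ) (x y : Fin 2) :
    shufWord q [x] [y] = single [x, y] 1 + chi q x y • single [y, x] 1 := by
  simp [shufWord]

lemma shufWord_pair_singleton (q : ℂ) (x y z : Fin 2) :
    shufWord q [x, y] [z] = single [x, y, z] 1 + chi q y z • single [x, z, y] 1
      + (chi q x z * chi q y z) • single [z, x, y] 1 := by
  simp [shufWord, mapDomain_add, add_assoc]

lemma shufMul_qSerre_of_ne {q : ℂ} (hq : q ≠ 0) {a b : Fin 2} (hab : a ≠ b) :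
    shufMul q (shufMul q (single [a] 1) (single [a] 1)) (single [b] 1)
      - (q + q⁻¹) • shufMul q (shufMul q (single [a] 1) (single [b] 1)) (single [a] 1)
      + shufMul q (shufMul q (single [b] 1) (single [a] 1)) (single [a] 1) = 0 := by
  simp only [shufMul_single_single, shufWord_singleton_singleton, shufMul_add_left,
    shufMul_smul_left, shufWord_pair_singleton, mul_one, one_smul]
  simp only [chi, hab, hab.symm, if_true, if_false]
  match_scalars <;> field_simp <;> ring

theorem q_serre_relations_shuffle (q : ℂ) (hq : q ≠ 0) :
    shufMul q (shufMul q F1 F1) F2 - (q + q⁻¹) • shufMul q (shufMul q F1 F2) F1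
        + shufMul q (shufMul q F2 F1) F1 = 0 ∧
    shufMul q (shufMul q F2 F2) F1 - (q + q⁻¹) • shufMul q (shufMul q F2 F1) F2
        + shufMul q (shufMul q F1 F2) F2 = 0 :=
  ⟨shufMul_qSerre_of_ne hq (by decide), shufMul_qSerre_of_ne hq (by decide)⟩
end

section
/- Fix an integer p ≥ 2 and set q = exp(iπ/p) ∈ ℂ. The p³ elements P(r,t,s) ∈ T(ℂ²) for 0 ≤ r,t,s ≤ p−1 are linearly independent over ℂ. -/
/-- `q = exp(iπ/p)`. -/
noncomputable def qval (p : ℕ) : ℂ := Complex.exp (Real.pi * Complex.I / p)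

/-- Gaussian `q²`-integer `[n] = Σ_{k<n} q^{2k}`. -/
noncomputable def qint (p n : ℕ) : ℂ := ∑ k ∈ Finset.range n, qval p ^ (2 * k)

/-- Gaussian `q²`-factorial `[n]! = ∏_{k=1}^n [k]`. -/
noncomputable def qfac (p n : ℕ) : ℂ := ∏ k ∈ Finset.range n, qint p (k + 1)

/-- Gaussian binomial `[m choose i] = [m]!/([i]!·[m−i]!)`. -/
noncomputable def qbinom (p m i : ℕ) : ℂ := qfac p m / (qfac p i * qfac p (m - i))

/-- Powers with respect to the `q`-shuffle product. -/
noncomputable def shufPow (q : ℂ) (f : TA) : ℕ → TA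
  | 0 => oneTA
  | n + 1 => shufMul q f (shufPow q f n)

/-- The element `X3 = −q⁻²·(F2 ⊗ F1)` of `T(ℂ²)`. -/
noncomputable def X3 (p : ℕ) : TA := (-(qval p)⁻¹ ^ 2) • Finsupp.single ([1, 0] : Word) 1

/-- The PBW element `P(r,t,s) = (1/([r]!·[t]!·[s]!)) · F1^{*r} * X3^{*t} * F2^{*s}`. -/
noncomputable def P (p r t s : ℕ) : TA :=
  (qfac p r * qfac p t * qfac p s)⁻¹ •
    shufMul (qval p) (shufMul (qval p) (shufPow (qval p) F1 r) (shufPow (qval p) (X3 p) t))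
      (shufPow (qval p) F2 s)

/-!
Evaluate at words. `P r t s` has a nonzero coefficient on the word `0^r 1^t 0^t 1^s`, and
`P r' t' s'` can have a nonzero coefficient there only if `r' + t' = r + t`, `t' + s' = t + s` and
`t' ≤ t`: letter counts are additive under shuffles, while the number of `1`s followed somewhere
by a `0` is superadditive, is at least `t'` on every word of `X3^{*t'}`, and equals `t` on
`0^r 1^t 0^t 1^s`. So the coefficient matrix is triangular with respect to `t`. Its diagonal
entries are products of `q²`-integers `[k]` with `0 < k < p`, which do not vanish because `q²` is
a primitive `p`-th root of unity.
-/

open Finsupp List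

theorem linearIndependent_of_triangular {ι κ R M : Type*} [LinearOrder κ] [Ring R]
    [NoZeroDivisors R] [AddCommGroup M] [Module R M] {v : ι → M} (f : ι → M →ₗ[R] R)
    (key : ι → κ) (hdiag : ∀ i, f i (v i) ≠ 0)
    (htri : ∀ i j, j ≠ i → f i (v j) ≠ 0 → key j < key i) : LinearIndependent R v := by
  rw [linearIndependent_iff]
  intro l hl
  by_contra hne
  obtain ⟨i, hi, hmin⟩ := l.support.exists_min_image key (support_nonempty_iff.mpr hne)
  have hsum : ∑ j ∈ l.support, l j * f i (v j) = 0 := by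
    simpa [linearCombination_apply, Finsupp.sum, map_finsetSum] using congrArg (f i) hl
  rw [Finset.sum_eq_single i] at hsum
  · exact mul_ne_zero (mem_support_iff.mp hi) (hdiag i) hsum
  · intro j hj hji
    by_contra hne'
    exact (hmin j hj).not_gt (htri i j hji (right_ne_zero_of_mul hne'))
  · exact absurd hi

lemma Finsupp.eq_of_mem_support_single {α M : Type*} [Zero M] {a a' : α} {b : M}
    (h : a ∈ (single a' b).support) : a = a' :=
  ((mem_support_single a a' b).1 h).1

lemma shufWord_nil_left (q : ℂ) (v : Word) : shufWord q [] v = single v 1 := by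
  cases v <;> rw [shufWord]

lemma shufWord_nil_right (q : ℂ) (u : Word) : shufWord q u [] = single u 1 := by
  cases u with
  | nil => rw [shufWord]
  | cons x u => rw [shufWord]; exact cons_ne_nil x u

lemma shufWord_cons_cons (q : ℂ) (x y : Fin 2) (u v : Word) :
    shufWord q (x :: u) (y :: v) =
      mapDomain (List.cons x) (shufWord q u (y :: v)) +
        ((x :: u).map (fun a => chi q a y)).prod •
          mapDomain (List.cons y) (shufWord q (x :: u) v) := by
  rw [shufWord]

inductive IsShuffle {α : Type*} : List α → List α → List α → Prop
  | nil : IsShuffle [] [] []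
  | left {u v w} (x : α) : IsShuffle u v w → IsShuffle (x :: u) v (x :: w)
  | right {u v w} (y : α) : IsShuffle u v w → IsShuffle u (y :: v) (y :: w)

namespace IsShuffle

variable {α : Type*} {u v w : List α}

lemma nil_left_self : ∀ v : List α, IsShuffle [] v v
  | [] => nil
  | y :: v => right y (nil_left_self v)

lemma nil_right_self : ∀ u : List α, IsShuffle u [] u
  | [] => nil
  | x :: u => left x (nil_right_self u)

lemma sublist_left (h : IsShuffle u v w) : u <+ w := by
  induction h with
  | nil => exact .slnil
  | left x _ ih => exact ih.cons_cons x
  | right y _ ih => exact ih.cons y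

lemma sublist_right (h : IsShuffle u v w) : v <+ w := by
  induction h with
  | nil => exact .slnil
  | left x _ ih => exact ih.cons x
  | right y _ ih => exact ih.cons_cons y

lemma count_eq [BEq α] [LawfulBEq α] (h : IsShuffle u v w) (a : α) :
    w.count a = u.count a + v.count a := by
  induction h with
  | nil => rfl
  | left x _ ih => simp only [count_cons, ih]; omega
  | right y _ ih => simp only [count_cons, ih]; omega

lemma head?_ne (h : IsShuffle u v w) {a : α} (hu : u.head? ≠ some a) (hv : v.head? ≠ some a) :
    w.head? ≠ some a := by
  cases h with
  | nil => exact hu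
  | left => exact hu
  | right => exact hv

end IsShuffle

lemma isShuffle_of_mem_support_shufWord {q : ℂ} {u v w : Word}
    (hw : w ∈ (shufWord q u v).support) : IsShuffle u v w := by
  induction u, v using shufWord.induct generalizing w with
  | case1 v =>
    rw [shufWord_nil_left] at hw
    exact eq_of_mem_support_single hw ▸ .nil_left_self v
  | case2 u =>
    rw [shufWord_nil_right] at hw
    exact eq_of_mem_support_single hw ▸ .nil_right_self u
  | case3 x u y v ihl ihr =>
    rw [shufWord_cons_cons] at hw
    rcases Finset.mem_union.mp (support_add hw) with h | h
    · obtain ⟨w', hw', rfl⟩ := Finset.mem_image.mp (mapDomain_support h)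
      exact .left x (ihl hw')
    · obtain ⟨w', hw', rfl⟩ := Finset.mem_image.mp (mapDomain_support (support_smul h))
      exact .right y (ihr hw')

lemma shufMul_apply (q : ℂ) (f g : TA) (w : Word) :
    shufMul q f g w = ∑ u ∈ f.support, ∑ v ∈ g.support, f u * g v * shufWord q u v w := by
  simp only [shufMul, Finsupp.sum, finsetSum_apply, Finsupp.smul_apply, smul_eq_mul]

lemma isShuffle_of_mem_support_shufMul {q : ℂ} {f g : TA} {w : Word}
    (hw : w ∈ (shufMul q f g).support) :
    ∃ u ∈ f.support, ∃ v ∈ g.support, IsShuffle u v w := by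
  obtain ⟨u, hu, hw⟩ := Finset.mem_biUnion.mp (support_sum hw)
  obtain ⟨v, hv, hw⟩ := Finset.mem_biUnion.mp (support_sum hw)
  exact ⟨u, hu, v, hv, isShuffle_of_mem_support_shufWord (support_smul hw)⟩

lemma shufMul_apply_of_unique {q : ℂ} {f g : TA} {w u₀ v₀ : Word}
    (h : ∀ u ∈ f.support, ∀ v ∈ g.support,
      w ∈ (shufWord q u v).support → u = u₀ ∧ v = v₀) :
    shufMul q f g w = f u₀ * g v₀ * shufWord q u₀ v₀ w := by
  rw [shufMul_apply]
  have hzero : ∀ u v, (u, v) ≠ (u₀, v₀) → f u * g v * shufWord q u v w = 0 := by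
    intro u v huv
    by_contra hne
    obtain ⟨hfg, hw⟩ := mul_ne_zero_iff.mp hne
    obtain ⟨hf, hg⟩ := mul_ne_zero_iff.mp hfg
    obtain ⟨rfl, rfl⟩ :=
      h u (mem_support_iff.mpr hf) v (mem_support_iff.mpr hg) (mem_support_iff.mpr hw)
    exact huv rfl
  rw [Finset.sum_eq_single u₀, Finset.sum_eq_single v₀]
  · exact fun v _ hv => hzero _ _ (by simp [hv])
  · intro hv; rw [notMem_support_iff.mp hv]; simp
  · exact fun u _ hu => Finset.sum_eq_zero fun v _ => hzero _ _ (by simp [hu])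
  · intro hu; rw [notMem_support_iff.mp hu]; simp

def onesBeforeZero : Word → ℕ
  | [] => 0
  | x :: w => onesBeforeZero w + if x = 1 ∧ 0 ∈ w then 1 else 0

lemma IsShuffle.onesBeforeZero_add_le {u v w : Word} (h : IsShuffle u v w) :
    onesBeforeZero u + onesBeforeZero v ≤ onesBeforeZero w := by
  induction h with
  | nil => rfl
  | @left u v w x h ih =>
    have := h.sublist_left.subset (a := 0)
    simp only [onesBeforeZero]
    split_ifs <;> grind
  | @right u v w y h ih =>
    have := h.sublist_right.subset (a := 0)
    simp only [onesBeforeZero]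
    split_ifs <;> grind

lemma onesBeforeZero_one_cons {w : Word} (h : 0 ∈ w) :
    onesBeforeZero (1 :: w) = onesBeforeZero w + 1 := by
  simp [onesBeforeZero, h]

lemma onesBeforeZero_replicate_zero_append (r : ℕ) (w : Word) :
    onesBeforeZero (replicate r 0 ++ w) = onesBeforeZero w := by
  induction r with
  | zero => rfl
  | succ r ih => simp [replicate_succ, onesBeforeZero, ih]

lemma onesBeforeZero_append_replicate_one (w : Word) (s : ℕ) :
    onesBeforeZero (w ++ replicate s 1) = onesBeforeZero w := by
  induction w with
  | nil =>
    induction s with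
    | zero => rfl
    | succ s ih => simpa [replicate_succ, onesBeforeZero, List.mem_replicate] using ih
  | cons x w ih => simp [onesBeforeZero, ih, List.mem_replicate]

lemma onesBeforeZero_replicate_one_append_replicate_zero (m n : ℕ) :
    onesBeforeZero (replicate m 1 ++ replicate n 0) = if n = 0 then 0 else m := by
  induction m with
  | zero => simpa [onesBeforeZero] using onesBeforeZero_replicate_zero_append n []
  | succ m ih =>
    rcases Nat.eq_zero_or_pos n with rfl | hn
    · simpa [onesBeforeZero] using onesBeforeZero_append_replicate_one [] (m + 1)
    · rw [replicate_succ, cons_append, onesBeforeZero_one_cons (by simp [hn.ne']), ih]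
      simp [hn.ne']

lemma onesBeforeZero_blocks (a b c d : ℕ) :
    onesBeforeZero (replicate a 0 ++ replicate b 1 ++ replicate c 0 ++ replicate d 1) =
      if c = 0 then 0 else b := by
  rw [onesBeforeZero_append_replicate_one, append_assoc, onesBeforeZero_replicate_zero_append,
    onesBeforeZero_replicate_one_append_replicate_zero]

lemma sublist_blocks {l : Word} {a b c d : ℕ}
    (h : l <+ replicate a 0 ++ replicate b 1 ++ replicate c 0 ++ replicate d 1) :
    ∃ a' ≤ a, ∃ b' ≤ b, ∃ c' ≤ c, ∃ d' ≤ d,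
      l = replicate a' 0 ++ replicate b' 1 ++ replicate c' 0 ++ replicate d' 1 := by
  obtain ⟨l, ld, rfl, h, hd⟩ := sublist_append_iff.mp h
  obtain ⟨l, lc, rfl, h, hc⟩ := sublist_append_iff.mp h
  obtain ⟨la, lb, rfl, ha, hb⟩ := sublist_append_iff.mp h
  obtain ⟨a', ha', rfl⟩ := sublist_replicate_iff.mp ha
  obtain ⟨b', hb', rfl⟩ := sublist_replicate_iff.mp hb
  obtain ⟨c', hc', rfl⟩ := sublist_replicate_iff.mp hc
  obtain ⟨d', hd', rfl⟩ := sublist_replicate_iff.mp hd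
  exact ⟨a', ha', b', hb', c', hc', d', hd', rfl⟩

lemma eq_of_isShuffle_oneZero {t : ℕ} {v : Word}
    (h : IsShuffle [1, 0] v (replicate (t + 1) 1 ++ replicate (t + 1) 0)) :
    v = replicate t 1 ++ replicate t 0 := by
  have hsub :
      v <+ replicate 0 0 ++ replicate (t + 1) 1 ++ replicate (t + 1) 0 ++ replicate 0 1 := by
    simpa using h.sublist_right
  obtain ⟨a, ha, b, -, c, -, d, hd, rfl⟩ := sublist_blocks hsub
  have h0 := h.count_eq 0
  have h1 := h.count_eq 1
  simp [count_replicate] at h0 h1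
  obtain ⟨rfl, rfl, rfl, rfl⟩ : a = 0 ∧ b = t ∧ c = t ∧ d = 0 := by omega
  simp

lemma eq_of_isShuffle_replicate_zero {r t : ℕ} {v : Word}
    (h : IsShuffle (replicate r 0) v (replicate r 0 ++ replicate t 1 ++ replicate t 0))
    (hv : v.head? ≠ some 0) : v = replicate t 1 ++ replicate t 0 := by
  have hsub : v <+ replicate r 0 ++ replicate t 1 ++ replicate t 0 ++ replicate 0 1 := by
    simpa using h.sublist_right
  obtain ⟨a, -, b, -, c, -, d, hd, rfl⟩ := sublist_blocks hsub
  obtain rfl : a = 0 := by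
    by_contra ha
    obtain ⟨a, rfl⟩ := Nat.exists_eq_succ_of_ne_zero ha
    simp [replicate_succ] at hv
  have h0 := h.count_eq 0
  have h1 := h.count_eq 1
  simp [count_replicate] at h0 h1
  obtain ⟨rfl, rfl, rfl⟩ : b = t ∧ c = t ∧ d = 0 := by omega
  simp

def pbwWord (r t s : ℕ) : Word := replicate r 0 ++ replicate t 1 ++ replicate t 0 ++ replicate s 1

lemma eq_of_isShuffle_replicate_one {r t s : ℕ} {m : Word}
    (h : IsShuffle m (replicate s 1) (pbwWord r t s))
    (hm : t ≤ onesBeforeZero m) : m = replicate r 0 ++ replicate t 1 ++ replicate t 0 := by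
  obtain ⟨a, ha, b, hb, c, hc, d, hd, rfl⟩ := sublist_blocks h.sublist_left
  have h0 := h.count_eq 0
  have h1 := h.count_eq 1
  rw [onesBeforeZero_blocks] at hm
  simp [pbwWord, count_replicate] at h0 h1
  obtain ⟨rfl, rfl, rfl, rfl⟩ : a = r ∧ b = t ∧ c = t ∧ d = 0 := by
    split_ifs at hm <;> omega
  simp

lemma qint_succ (p n : ℕ) : qint p (n + 1) = qval p ^ 2 * qint p n + 1 := by
  simp only [qint, pow_mul, geom_sum_succ]

lemma qint_ne_zero {p j : ℕ} (hj0 : j ≠ 0) (hjp : j < p) : qint p j ≠ 0 := by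
  have hζ : IsPrimitiveRoot (qval p ^ 2) p := by
    rw [qval, ← Complex.exp_nat_mul]
    convert Complex.isPrimitiveRoot_exp p (by omega) using 2
    ring
  intro h
  apply hζ.pow_ne_one_of_pos_of_lt hj0 hjp
  simp only [qint, pow_mul] at h
  rw [← sub_eq_zero, ← geom_sum_mul, h, zero_mul]

lemma qfac_ne_zero {p n : ℕ} (hn : n < p) : qfac p n ≠ 0 :=
  Finset.prod_ne_zero_iff.mpr fun k hk => qint_ne_zero k.succ_ne_zero (by simp at hk; omega)

lemma mapDomain_cons_apply_cons (x : Fin 2) (f : TA) (w : Word) :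
    mapDomain (List.cons x) f (x :: w) = f w :=
  mapDomain_apply cons_injective f w

lemma mapDomain_cons_apply_cons_of_ne {x y : Fin 2} (hxy : y ≠ x) (f : TA) (w : Word) :
    mapDomain (List.cons y) f (x :: w) = 0 :=
  mapDomain_of_notMem_range f _ fun ⟨_, h⟩ => hxy (List.cons.inj h).1

lemma shufWord_singleton_replicate (p : ℕ) (c : Fin 2) (n : ℕ) :
    shufWord (qval p) [c] (replicate n c) = single (replicate (n + 1) c) (qint p (n + 1)) := by
  induction n with
  | zero => simp [shufWord_nil_right, qint]
  | succ n ih =>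
    rw [replicate_succ, shufWord_cons_cons, shufWord_nil_left, ih, mapDomain_single,
      mapDomain_single, smul_single, ← replicate_succ, ← replicate_succ, ← single_add,
      qint_succ p (n + 1)]
    simp only [map_cons, map_nil, prod_cons, prod_nil, chi, if_true, mul_one, smul_eq_mul]
    ring_nf

lemma shufPow_single_singleton (p : ℕ) (c : Fin 2) (n : ℕ) :
    shufPow (qval p) (single [c] 1) n = single (replicate n c) (qfac p n) := by
  induction n with
  | zero => simp [shufPow, oneTA, qfac]
  | succ n ih =>
    rw [shufPow, ih, shufMul, sum_single_index (by simp), sum_single_index (by simp), one_mul,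
      shufWord_singleton_replicate, smul_single, smul_eq_mul, qfac, qfac, Finset.prod_range_succ]

lemma shufWord_zero_apply (p m n : ℕ) :
    shufWord (qval p) [0] (replicate m 1 ++ replicate n 0)
        (replicate m 1 ++ replicate (n + 1) 0) =
      (qval p)⁻¹ ^ m * qint p (n + 1) := by
  induction m with
  | zero => simp [shufWord_singleton_replicate]
  | succ m ih =>
    rw [replicate_succ, cons_append, cons_append, shufWord_cons_cons, shufWord_nil_left,
      Finsupp.add_apply, Finsupp.smul_apply, mapDomain_cons_apply_cons_of_ne (by decide),
      mapDomain_cons_apply_cons, ih]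
    simp [chi]
    ring

lemma shufWord_oneZero_apply (p m n : ℕ) :
    shufWord (qval p) [1, 0] (replicate m 1 ++ replicate n 0)
        (replicate (m + 1) 1 ++ replicate (n + 1) 0) =
      qint p (m + 1) * qint p (n + 1) * (qval p)⁻¹ ^ m := by
  induction m with
  | zero =>
    cases n with
    | zero => simp [shufWord_nil_right, qint]
    | succ n =>
      rw [replicate_zero, nil_append, replicate_succ, shufWord_cons_cons, replicate_one,
        cons_append, nil_append, Finsupp.add_apply, Finsupp.smul_apply,
        mapDomain_cons_apply_cons, mapDomain_cons_apply_cons_of_ne (by decide), ← replicate_succ,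
        shufWord_singleton_replicate]
      simp [qint]
  | succ m ih =>
    rw [replicate_succ, cons_append, shufWord_cons_cons, replicate_succ, cons_append,
      Finsupp.add_apply, Finsupp.smul_apply, mapDomain_cons_apply_cons,
      mapDomain_cons_apply_cons, ← cons_append, ← replicate_succ, shufWord_zero_apply, ih,
      qint_succ p (m + 1)]
    simp [chi]
    ring

lemma shufWord_apply_append_of_head?_notMem (q : ℂ) (u v : Word)
    (h : ∀ y ∈ v.head?, y ∉ u) :
    shufWord q u v (u ++ v) = 1 := by
  induction u with
  | nil => simp [shufWord_nil_left]
  | cons x u ih =>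
    cases v with
    | nil => simp [shufWord_nil_right]
    | cons y v =>
      simp only [head?_cons, Option.mem_def, Option.some.injEq, mem_cons, not_or,
        forall_eq'] at h ih
      rw [shufWord_cons_cons, cons_append, Finsupp.add_apply, Finsupp.smul_apply,
        mapDomain_cons_apply_cons, mapDomain_cons_apply_cons_of_ne h.1, ih h.2, smul_zero,
        add_zero]

lemma getLast?_ne_of_cons {α : Type*} {x a : α} {u : List α} (h : (x :: u).getLast? ≠ some a) :
    u.getLast? ≠ some a := by
  cases u <;> simp_all

lemma zero_mem_of_getLast?_one_cons_ne {u : Word} (h : (1 :: u).getLast? ≠ some 1) : 0 ∈ u := by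
  cases u with
  | nil => simp at h
  | cons b u =>
    rw [getLast?_cons_cons, getLast?_eq_some_getLast (cons_ne_nil b u), ne_eq,
      Option.some.injEq] at h
    have hlast := getLast_mem (cons_ne_nil b u)
    rwa [show (b :: u).getLast _ = 0 by omega] at hlast

lemma shufWord_apply_append_replicate_one (q : ℂ) (u : Word) (hu : u.getLast? ≠ some 1)
    (s : ℕ) :
    shufWord q u (replicate s 1) (u ++ replicate s 1) = 1 := by
  induction u with
  | nil => simp [shufWord_nil_left]
  | cons x u ih =>
    cases s with
    | zero => simp [shufWord_nil_right]
    | succ s =>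
      rw [replicate_succ, shufWord_cons_cons, cons_append, Finsupp.add_apply, Finsupp.smul_apply,
        mapDomain_cons_apply_cons, ← replicate_succ, ih (getLast?_ne_of_cons hu)]
      suffices mapDomain (List.cons 1) (shufWord q (x :: u) (replicate s 1))
          (x :: (u ++ replicate (s + 1) 1)) = 0 by simp [this]
      obtain rfl | rfl : x = 0 ∨ x = 1 := by omega
      · exact mapDomain_cons_apply_cons_of_ne (by decide) _ _
      -- moving a `1` of the right factor in front of `1 :: u` would cost a `1` before a `0`
      rw [mapDomain_cons_apply_cons, ← notMem_support_iff]
      intro hmem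
      have hle := (isShuffle_of_mem_support_shufWord hmem).onesBeforeZero_add_le
      rw [onesBeforeZero_append_replicate_one,
        onesBeforeZero_one_cons (zero_mem_of_getLast?_one_cons_ne hu)] at hle
      omega

lemma X3_eq_single (p : ℕ) : X3 p = single [1, 0] (-(qval p)⁻¹ ^ 2) := by
  rw [X3, smul_single, smul_eq_mul, mul_one]

lemma mem_support_shufPow_X3 {q : ℂ} {p t : ℕ} {v : Word}
    (hv : v ∈ (shufPow q (X3 p) t).support) :
    v.count 0 = t ∧ v.count 1 = t ∧ t ≤ onesBeforeZero v ∧ v.head? ≠ some 0 := by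
  induction t generalizing v with
  | zero =>
    obtain rfl := eq_of_mem_support_single hv
    simp [onesBeforeZero]
  | succ t ih =>
    obtain ⟨u, hu, v', hv', h⟩ := isShuffle_of_mem_support_shufMul hv
    rw [X3_eq_single] at hu
    obtain rfl := eq_of_mem_support_single hu
    obtain ⟨h0, h1, hobz, hhead⟩ := ih hv'
    have hle := h.onesBeforeZero_add_le
    simp [onesBeforeZero] at hle
    refine ⟨?_, ?_, by omega, h.head?_ne (by simp) hhead⟩
    · simp [h.count_eq, h0, add_comm]
    · simp [h.count_eq, h1, add_comm]

lemma shufPow_X3_apply_succ (p t : ℕ) :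
    shufPow (qval p) (X3 p) (t + 1) (replicate (t + 1) 1 ++ replicate (t + 1) 0) =
      -(qval p)⁻¹ ^ 2 * shufPow (qval p) (X3 p) t (replicate t 1 ++ replicate t 0) *
        (qint p (t + 1) * qint p (t + 1) * (qval p)⁻¹ ^ t) := by
  rw [shufPow, shufMul_apply_of_unique (u₀ := [1, 0]) (v₀ := replicate t 1 ++ replicate t 0),
    shufWord_oneZero_apply, X3_eq_single, single_eq_same]
  intro u hu v _ hw
  rw [X3_eq_single] at hu
  obtain rfl := eq_of_mem_support_single hu
  exact ⟨rfl, eq_of_isShuffle_oneZero (isShuffle_of_mem_support_shufWord hw)⟩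

lemma shufPow_X3_apply_ne_zero {p t : ℕ} (ht : t < p) :
    shufPow (qval p) (X3 p) t (replicate t 1 ++ replicate t 0) ≠ 0 := by
  induction t with
  | zero => simp [shufPow, oneTA]
  | succ t ih =>
    have hq : (qval p)⁻¹ ≠ 0 := inv_ne_zero (Complex.exp_ne_zero _)
    have hint := qint_ne_zero t.succ_ne_zero ht
    rw [shufPow_X3_apply_succ]
    exact mul_ne_zero (mul_ne_zero (neg_ne_zero.mpr (pow_ne_zero 2 hq)) (ih (by omega)))
      (mul_ne_zero (mul_ne_zero hint hint) (pow_ne_zero _ hq))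

lemma shufPow_F1 (p r : ℕ) : shufPow (qval p) F1 r = single (replicate r 0) (qfac p r) :=
  shufPow_single_singleton p 0 r

lemma shufPow_F2 (p s : ℕ) : shufPow (qval p) F2 s = single (replicate s 1) (qfac p s) :=
  shufPow_single_singleton p 1 s

lemma mem_support_F1pow_mul_X3pow {p r t : ℕ} {m : Word}
    (hm : m ∈ (shufMul (qval p) (shufPow (qval p) F1 r) (shufPow (qval p) (X3 p) t)).support) :
    m.count 0 = r + t ∧ m.count 1 = t ∧ t ≤ onesBeforeZero m := by
  obtain ⟨u, hu, v, hv, h⟩ := isShuffle_of_mem_support_shufMul hm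
  rw [shufPow_F1] at hu
  obtain rfl := eq_of_mem_support_single hu
  obtain ⟨h0, h1, hobz, -⟩ := mem_support_shufPow_X3 hv
  have := h.onesBeforeZero_add_le
  exact ⟨by simp [h.count_eq, h0], by simp [h.count_eq, h1, count_replicate], by omega⟩

lemma mem_support_P {p r t s : ℕ} {w : Word} (hw : w ∈ (P p r t s).support) :
    w.count 0 = r + t ∧ w.count 1 = t + s ∧ t ≤ onesBeforeZero w := by
  obtain ⟨m, hm, u, hu, h⟩ := isShuffle_of_mem_support_shufMul (support_smul hw)
  rw [shufPow_F2] at hu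
  obtain rfl := eq_of_mem_support_single hu
  obtain ⟨h0, h1, hobz⟩ := mem_support_F1pow_mul_X3pow hm
  have := h.onesBeforeZero_add_le
  exact ⟨by simp [h.count_eq, h0, count_replicate], by simp [h.count_eq, h1], by omega⟩

lemma F1pow_mul_X3pow_apply (p r t : ℕ) :
    shufMul (qval p) (shufPow (qval p) F1 r) (shufPow (qval p) (X3 p) t)
        (replicate r 0 ++ replicate t 1 ++ replicate t 0) =
      qfac p r * shufPow (qval p) (X3 p) t (replicate t 1 ++ replicate t 0) := by
  rw [shufMul_apply_of_unique (u₀ := replicate r 0) (v₀ := replicate t 1 ++ replicate t 0),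
    shufPow_F1, single_eq_same, append_assoc, shufWord_apply_append_of_head?_notMem, mul_one]
  · cases t <;> simp [replicate_succ, mem_replicate]
  intro u hu v hv hw
  rw [shufPow_F1] at hu
  obtain rfl := eq_of_mem_support_single hu
  exact ⟨rfl, eq_of_isShuffle_replicate_zero (isShuffle_of_mem_support_shufWord hw)
    (mem_support_shufPow_X3 hv).2.2.2⟩

lemma P_apply_pbwWord (p r t s : ℕ) :
    P p r t s (pbwWord r t s) = (qfac p r * qfac p t * qfac p s)⁻¹ *
      (qfac p r * shufPow (qval p) (X3 p) t (replicate t 1 ++ replicate t 0) * qfac p s) := by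
  rw [P, Finsupp.smul_apply, smul_eq_mul, pbwWord,
    shufMul_apply_of_unique (u₀ := replicate r 0 ++ replicate t 1 ++ replicate t 0)
      (v₀ := replicate s 1), F1pow_mul_X3pow_apply, shufPow_F2, single_eq_same,
    shufWord_apply_append_replicate_one, mul_one]
  · cases t <;> simp [getLast?_append, getLast?_replicate]
  intro m hm u hu hw
  rw [shufPow_F2] at hu
  obtain rfl := eq_of_mem_support_single hu
  exact ⟨eq_of_isShuffle_replicate_one (isShuffle_of_mem_support_shufWord hw)
    (mem_support_F1pow_mul_X3pow hm).2.2, rfl⟩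

lemma P_apply_pbwWord_ne_zero {p r t s : ℕ} (hr : r < p) (ht : t < p) (hs : s < p) :
    P p r t s (pbwWord r t s) ≠ 0 := by
  rw [P_apply_pbwWord]
  have := qfac_ne_zero hr
  have := qfac_ne_zero ht
  have := qfac_ne_zero hs
  have := shufPow_X3_apply_ne_zero ht
  positivity

lemma eq_of_P_apply_pbwWord_ne_zero {p r t s r' t' s' : ℕ}
    (h : P p r' t' s' (pbwWord r t s) ≠ 0) (ht : t ≤ t') : r' = r ∧ t' = t ∧ s' = s := by
  obtain ⟨h0, h1, hobz⟩ := mem_support_P (mem_support_iff.mpr h)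
  rw [pbwWord, onesBeforeZero_blocks] at hobz
  simp [pbwWord, count_replicate] at h0 h1
  split_ifs at hobz <;> omega

theorem pbw_linearIndependent_general (p : ℕ) :
    LinearIndependent ℂ
      (fun rts : Fin p × Fin p × Fin p => P p rts.1.val rts.2.1.val rts.2.2.val) := by
  refine linearIndependent_of_triangular (fun i => lapply (pbwWord i.1 i.2.1 i.2.2))
    (fun i => i.2.1) (fun ⟨r, t, s⟩ => P_apply_pbwWord_ne_zero r.isLt t.isLt s.isLt) ?_
  rintro ⟨r, t, s⟩ ⟨r', t', s'⟩ hne h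
  by_contra hle
  obtain ⟨hr, ht, hs⟩ : (r' : ℕ) = r ∧ (t' : ℕ) = t ∧ (s' : ℕ) = s :=
    eq_of_P_apply_pbwWord_ne_zero h (not_lt.mp hle)
  exact hne (by rw [Fin.ext hr, Fin.ext ht, Fin.ext hs])

theorem pbw_linearIndependent (p : ℕ) (hp : 2 ≤ p) :
    LinearIndependent ℂ
      (fun rts : Fin p × Fin p × Fin p => P p rts.1.val rts.2.1.val rts.2.2.val) :=
  pbw_linearIndependent_general p
end
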